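/- arXiv:1801.02995 — 7 statements merged into one kernel-verified Lean document; each statement's English description precedes it below -/
import Mathlib

section
/- Let (g, [·,·]) be a finite-dimensional Lie algebra with a nondegenerate skew-symmetric bilinear form ω satisfying ω([x,y],z) + ω([y,z],x) + ω([z,x],y) = 0 for all x,y,z. Define a bilinear product ∗ on g by the condition ω(x, y∗z) = ω([x,y], z) for all x (this determines y∗z uniquely by nondegeneracy). Then ∗ is a left-symmetric product on g whose associated commutator x∗y − y∗x equals the Lie bracket [x,y]. -/
/-!
Left multiplication `L_y = mul y` is minus the `ω`-transpose of `ad y`, since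
`ω(x, L_y z) = -ω(ad_y x, z)`. Transposition reverses commutators, so the Jacobi identity gives
`L_{[x,y]} = [L_x, L_y]`; closedness of `ω` gives `x∗y - y∗x = [x,y]`. Together these say
`L_{x∗y - y∗x} = [L_x, L_y]`, which is left-symmetry.
-/

namespace SymplecticLieAlgebra

variable {R L : Type*} [CommRing R] [LieRing L] [LieAlgebra R L]
  {ω : L →ₗ[R] L →ₗ[R] R} {mul : L →ₗ[R] L →ₗ[R] L}

theorem eq_of_forall_apply_eq (hω : ω.SeparatingRight) {a b : L} (h : ∀ w, ω w a = ω w b) :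
    a = b :=
  sub_eq_zero.mp <| hω _ fun w => by rw [map_sub, h, sub_self]

theorem separatingRight_of_skew (hskew : ∀ x y : L, ω x y = - ω y x) (hω : ω.SeparatingLeft) :
    ω.SeparatingRight :=
  ((LinearMap.IsRefl.nondegenerate_iff_separatingLeft fun x y h => by
    rw [hskew, h, neg_zero]).mpr hω).2

theorem mul_sub_mul_swap (hskew : ∀ x y : L, ω x y = - ω y x) (hω : ω.SeparatingRight)
    (hclosed : ∀ x y z : L, ω ⁅x, y⁆ z + ω ⁅y, z⁆ x + ω ⁅z, x⁆ y = 0)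
    (hmul : ∀ x y z : L, ω x (mul y z) = ω ⁅x, y⁆ z) (x y : L) :
    mul x y - mul y x = ⁅x, y⁆ := by
  refine eq_of_forall_apply_eq hω fun w => ?_
  have hwy : ω ⁅y, w⁆ x = - ω ⁅w, y⁆ x := by
    rw [← lie_skew y w, map_neg, LinearMap.neg_apply]
  rw [map_sub, hmul, hmul, hskew w]
  linear_combination hclosed w x y - hwy

theorem mul_lie (hω : ω.SeparatingRight) (hmul : ∀ x y z : L, ω x (mul y z) = ω ⁅x, y⁆ z)
    (x y z : L) : mul ⁅x, y⁆ z = mul x (mul y z) - mul y (mul x z) := by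
  refine eq_of_forall_apply_eq hω fun w => ?_
  have jacobi : ⁅w, ⁅x, y⁆⁆ = ⁅⁅w, x⁆, y⁆ - ⁅⁅w, y⁆, x⁆ := by
    rw [leibniz_lie, ← lie_skew ⁅w, y⁆ x, sub_neg_eq_add]
  rw [map_sub, hmul, hmul, hmul, hmul, hmul, jacobi, map_sub, LinearMap.sub_apply]

end SymplecticLieAlgebra

theorem symplectic_gives_lsa_general {F : Type*} [Field F] {g : Type*} [LieRing g]
    [LieAlgebra F g]
    (ω : g →ₗ[F] g →ₗ[F] F)
    (hskew : ∀ x y : g, ω x y = - ω y x)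
    (hnd : ∀ x : g, (∀ y : g, ω x y = 0) → x = 0)
    (hclosed : ∀ x y z : g, ω ⁅x, y⁆ z + ω ⁅y, z⁆ x + ω ⁅z, x⁆ y = 0)
    (mul : g →ₗ[F] g →ₗ[F] g)
    (hmul : ∀ x y z : g, ω x (mul y z) = ω ⁅x, y⁆ z) :
    (∀ x y z : g, mul (mul x y) z - mul x (mul y z)
        = mul (mul y x) z - mul y (mul x z))
      ∧ ∀ x y : g, mul x y - mul y x = ⁅x, y⁆ := by
  have hω : ω.SeparatingRight := SymplecticLieAlgebra.separatingRight_of_skew hskew hnd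
  have hcomm := SymplecticLieAlgebra.mul_sub_mul_swap hskew hω hclosed hmul
  refine ⟨fun x y z => sub_eq_sub_iff_sub_eq_sub.mpr ?_, hcomm⟩
  rw [← LinearMap.sub_apply, ← map_sub, hcomm, SymplecticLieAlgebra.mul_lie hω hmul]

/-- (Chu) A symplectic Lie algebra carries a compatible left-symmetric product
defined by `ω(x, y∗z) = ω([x,y], z)`. -/
theorem symplectic_gives_lsa {F : Type*} [Field F] {g : Type*} [LieRing g]
    [LieAlgebra F g] [FiniteDimensional F g]
    (ω : g →ₗ[F] g →ₗ[F] F)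
    (hskew : ∀ x y : g, ω x y = - ω y x)
    (hnd : ∀ x : g, (∀ y : g, ω x y = 0) → x = 0)
    (hclosed : ∀ x y z : g, ω ⁅x, y⁆ z + ω ⁅y, z⁆ x + ω ⁅z, x⁆ y = 0)
    (mul : g →ₗ[F] g →ₗ[F] g)
    (hmul : ∀ x y z : g, ω x (mul y z) = ω ⁅x, y⁆ z) :
    (∀ x y z : g, mul (mul x y) z - mul x (mul y z)
        = mul (mul y x) z - mul y (mul x z))
      ∧ ∀ x y : g, mul x y - mul y x = ⁅x, y⁆ :=
  symplectic_gives_lsa_general ω hskew hnd hclosed mul hmul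
end

section
/- Let (g, ω) be a finite-dimensional symplectic Lie algebra and let ∗ be the left-symmetric product defined by ω(x, y∗z) = ω([x,y], z). Then ω is exact (i.e., there exists f ∈ g* with ω(x,y) = f([x,y]) for all x,y) if and only if the left-symmetric algebra (g, ∗) has a right identity, i.e., an element e with x∗e = x for all x ∈ g. -/
/-!
Pairing with `e` turns a right identity of `∗` into a primitive of `ω`: the defining identity
gives `ω(x, y∗e) = ω([x,y], e)`, so by nondegeneracy `y∗e = y` for all `y` exactly when
`ω = d(ω(·, e))`. Conversely, in finite dimension every `f ∈ g*` is of the form `ω(·, e)`.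
-/

open LinearMap (BilinForm)

namespace LinearMap

theorem isRefl_of_forall_eq_neg {R M N : Type*} [CommRing R] [AddCommGroup M] [Module R M]
    [AddCommGroup N] [Module R N] {B : M →ₗ[R] M →ₗ[R] N} (h : ∀ x y, B x y = -B y x) :
    B.IsRefl :=
  fun x y hxy => by rw [h, hxy, neg_zero]

theorem Nondegenerate.exists_apply_eq {K V : Type*} [Field K] [AddCommGroup V]
    [Module K V] [FiniteDimensional K V] {B : BilinForm K V} (hB : B.Nondegenerate)
    (f : Module.Dual K V) : ∃ e, ∀ x, B x e = f x :=
  let ⟨e, he⟩ := (B.flip.toDual (flip_nondegenerate.mpr hB)).surjective f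
  ⟨e, fun x => LinearMap.congr_fun he x⟩

end LinearMap

theorem forall_mul_eq_self_iff {R L : Type*} [CommRing R] [LieRing L] [LieAlgebra R L]
    {ω : BilinForm R L} (hω : ω.SeparatingRight) {mul : L →ₗ[R] L →ₗ[R] L}
    (hmul : ∀ x y z, ω x (mul y z) = ω ⁅x, y⁆ z) (e : L) :
    (∀ x, mul x e = x) ↔ ∀ x y, ω x y = ω ⁅x, y⁆ e := by
  constructor
  · intro he x y
    rw [← hmul, he]
  · intro he y
    refine sub_eq_zero.mp (hω _ fun x => ?_)
    rw [map_sub, hmul, ← he, sub_self]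

theorem frobenius_iff_right_identity_general {F : Type*} [Field F] {g : Type*} [LieRing g]
    [LieAlgebra F g] [FiniteDimensional F g]
    (ω : g →ₗ[F] g →ₗ[F] F)
    (hskew : ∀ x y : g, ω x y = - ω y x)
    (hnd : ∀ x : g, (∀ y : g, ω x y = 0) → x = 0)
    (mul : g →ₗ[F] g →ₗ[F] g)
    (hmul : ∀ x y z : g, ω x (mul y z) = ω ⁅x, y⁆ z) :
    (∃ f : Module.Dual F g, ∀ x y : g, ω x y = f ⁅x, y⁆)
      ↔ ∃ e : g, ∀ x : g, mul x e = x := by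
  have hω : ω.Nondegenerate :=
    (LinearMap.isRefl_of_forall_eq_neg hskew).nondegenerate_iff_separatingLeft.mpr hnd
  simp_rw [forall_mul_eq_self_iff hω.2 hmul]
  constructor
  · rintro ⟨f, hf⟩
    obtain ⟨e, he⟩ := hω.exists_apply_eq f
    exact ⟨e, fun x y => by rw [hf, he]⟩
  · rintro ⟨e, he⟩
    exact ⟨ω.flip e, he⟩

/-- A symplectic Lie algebra `(g, ω)` is Frobenius (i.e. `ω` is exact) if and
only if the compatible left-symmetric product defined by
`ω(x, y∗z) = ω([x,y], z)` has a right identity. -/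
theorem frobenius_iff_right_identity {F : Type*} [Field F] {g : Type*} [LieRing g]
    [LieAlgebra F g] [FiniteDimensional F g]
    (ω : g →ₗ[F] g →ₗ[F] F)
    (hskew : ∀ x y : g, ω x y = - ω y x)
    (hnd : ∀ x : g, (∀ y : g, ω x y = 0) → x = 0)
    (hclosed : ∀ x y z : g, ω ⁅x, y⁆ z + ω ⁅y, z⁆ x + ω ⁅z, x⁆ y = 0)
    (mul : g →ₗ[F] g →ₗ[F] g)
    (hmul : ∀ x y z : g, ω x (mul y z) = ω ⁅x, y⁆ z) :
    (∃ f : Module.Dual F g, ∀ x y : g, ω x y = f ⁅x, y⁆)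
      ↔ ∃ e : g, ∀ x : g, mul x e = x :=
  frobenius_iff_right_identity_general ω hskew hnd mul hmul
end

section
/- Let (g, ∗) be a finite-dimensional left-symmetric algebra with a right identity e (so x∗e = x for all x ∈ g). Then e is also a right identity for the induced left-symmetric product on the symplectic Lie algebra g ⊕ g*: for every v ∈ g*, v∗e = v. Consequently g ⊕ g* is a Frobenius Lie algebra. -/
/-! Put `f = ω(·, e)`, i.e. `f(x + u) = -u(e)`. For `a = x + u` and `b = y + v`, the `g*`-part
of `[a, b]` evaluated at `e` is `-v(x ∗ e) + u(y ∗ e) = -ω(a, b)` since `e` is a right identity,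
so `f([a, b]) = ω(a, b)` and `ω` is exact. Then `ω(a, b ∗ e) = ω([a, b], e) = ω(a, b)` for all `a`,
and nondegeneracy of `ω` gives `b ∗ e = b`. -/

namespace LeftSymmetricDouble

open Module

variable {R M : Type*} [CommRing R] [AddCommGroup M] [Module R M]

def form (a b : M × Dual R M) : R := b.2 a.1 - a.2 b.1

def bracket (mul : M →ₗ[R] M →ₗ[R] M) (a b : M × Dual R M) : M × Dual R M :=
  (mul a.1 b.1 - mul b.1 a.1, -(b.2 ∘ₗ mul a.1) + (a.2 ∘ₗ mul b.1))

theorem eq_of_forall_form_eq [Projective R M] {s t : M × Dual R M}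
    (h : ∀ a, form a s = form a t) : s = t := by
  have hsnd : s.2 = t.2 := LinearMap.ext fun x => by simpa [form] using h (x, 0)
  have hfst : s.1 = t.1 := eval_apply_injective R <| LinearMap.ext fun u => by
    simpa [form] using h (0, u)
  exact Prod.ext hfst hsnd

variable {mul : M →ₗ[R] M →ₗ[R] M} {e : M}

theorem form_bracket_right_identity (he : ∀ x, mul x e = x) (a b : M × Dual R M) :
    form (bracket mul a b) (e, 0) = form a b := by
  simp only [form, bracket, he, LinearMap.zero_apply, LinearMap.add_apply, LinearMap.neg_apply,
    LinearMap.comp_apply]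
  ring

theorem star_right_identity [Projective R M] (he : ∀ x, mul x e = x)
    {star : M × Dual R M → M × Dual R M → M × Dual R M}
    (hstar : ∀ a b c, form a (star b c) = form (bracket mul a b) c) (b : M × Dual R M) :
    star b (e, 0) = b :=
  eq_of_forall_form_eq fun a => by rw [hstar, form_bracket_right_identity he]

theorem form_exact (he : ∀ x, mul x e = x) :
    ∃ f : Dual R (M × Dual R M), ∀ a b, form a b = f (bracket mul a b) :=
  ⟨-(LinearMap.applyₗ e ∘ₗ LinearMap.snd R M (Dual R M)), fun a b => by
    rw [← form_bracket_right_identity he a b]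
    simp [form]⟩

end LeftSymmetricDouble

theorem lsa_right_identity_double_frobenius_general {F : Type*} [Field F] {g : Type*}
    [AddCommGroup g] [Module F g]
    (mul : g →ₗ[F] g →ₗ[F] g)
    (e : g) (he : ∀ x : g, mul x e = x)
    (br : (g × Module.Dual F g) → (g × Module.Dual F g) → (g × Module.Dual F g))
    (hbr : ∀ a b, br a b = (mul a.1 b.1 - mul b.1 a.1,
        - (b.2 ∘ₗ mul a.1) + (a.2 ∘ₗ mul b.1)))
    (ω : (g × Module.Dual F g) → (g × Module.Dual F g) → F)
    (hω : ∀ a b, ω a b = b.2 a.1 - a.2 b.1)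
    (star : (g × Module.Dual F g) → (g × Module.Dual F g) → (g × Module.Dual F g))
    (hstar : ∀ a b c, ω a (star b c) = ω (br a b) c) :
    (∀ v : Module.Dual F g, star (0, v) (e, 0) = (0, v))
      ∧ ∃ f : Module.Dual F (g × Module.Dual F g), ∀ a b, ω a b = f (br a b) := by
  obtain rfl : br = LeftSymmetricDouble.bracket mul := funext fun a => funext (hbr a)
  obtain rfl : ω = LeftSymmetricDouble.form := funext fun a => funext (hω a)
  exact ⟨fun v => LeftSymmetricDouble.star_right_identity he hstar (0, v),
    LeftSymmetricDouble.form_exact he⟩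

/-- If a left-symmetric algebra `(g,∗)` has a right identity `e`, then `e` is
also a right identity for the induced left-symmetric product on the symplectic
double `g ⊕ g*` (in particular `v∗e = v` for `v ∈ g*`), and consequently
`g ⊕ g*` is a Frobenius Lie algebra (its symplectic form is exact). -/
theorem lsa_right_identity_double_frobenius {F : Type*} [Field F] {g : Type*}
    [AddCommGroup g] [Module F g] [FiniteDimensional F g]
    (mul : g →ₗ[F] g →ₗ[F] g)
    (hls : ∀ x y z : g, mul (mul x y) z - mul x (mul y z)
        = mul (mul y x) z - mul y (mul x z))
    (e : g) (he : ∀ x : g, mul x e = x)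
    (br : (g × Module.Dual F g) → (g × Module.Dual F g) → (g × Module.Dual F g))
    (hbr : ∀ a b, br a b = (mul a.1 b.1 - mul b.1 a.1,
        - (b.2 ∘ₗ mul a.1) + (a.2 ∘ₗ mul b.1)))
    (ω : (g × Module.Dual F g) → (g × Module.Dual F g) → F)
    (hω : ∀ a b, ω a b = b.2 a.1 - a.2 b.1)
    (star : (g × Module.Dual F g) → (g × Module.Dual F g) → (g × Module.Dual F g))
    (hstar : ∀ a b c, ω a (star b c) = ω (br a b) c) :
    (∀ v : Module.Dual F g, star (0, v) (e, 0) = (0, v))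
      ∧ ∃ f : Module.Dual F (g × Module.Dual F g), ∀ a b, ω a b = f (br a b) :=
  lsa_right_identity_double_frobenius_general mul e he br hbr ω hω star hstar
end

section
/- Let (g, ∗) be a finite-dimensional left-symmetric algebra over a field of characteristic zero. If the associated product on g ⊕ g* makes it a Frobenius Lie algebra, then the left-symmetric algebra (g, ∗) has a right identity. More precisely: if g ⊕ g* with the standard symplectic form is Frobenius and its induced left-symmetric product has right identity e + v₀ with e ∈ g, v₀ ∈ g*, then e is a right identity of (g, ∗). -/
theorem double_frobenius_right_identity_general {F : Type*} [Field F]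
    {g : Type*} [AddCommGroup g] [Module F g]
    (mul : g →ₗ[F] g →ₗ[F] g)
    (star : (g × Module.Dual F g) → (g × Module.Dual F g) → (g × Module.Dual F g))
    (hstar_add : ∀ a b c, star a (b + c) = star a b + star a c)
    (hsub : ∀ x y : g, (star (x, 0) (y, 0)).1 = mul x y)
    (hideal : ∀ (x : g) (v : Module.Dual F g), (star (x, 0) (0, v)).1 = 0)
    (e : g) (v₀ : Module.Dual F g)
    (hrid : ∀ a, star a (e, v₀) = a) :
    ∀ x : g, mul x e = x := by
  intro x
  have hsplit : ((e, v₀) : g × Module.Dual F g) = (e, 0) + (0, v₀) := by simp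
  have h := congrArg Prod.fst (hrid (x, 0))
  rwa [hsplit, hstar_add, Prod.fst_add, hsub, hideal, add_zero] at h

/-- If the symplectic double `g ⊕ g*` of a left-symmetric algebra `(g,∗)` is a
Frobenius Lie algebra and its induced left-symmetric product has a right
identity `e + v₀` with `e ∈ g`, `v₀ ∈ g*`, then `e` is a right identity of
`(g,∗)`. -/
theorem double_frobenius_right_identity {F : Type*} [Field F] [CharZero F]
    {g : Type*} [AddCommGroup g] [Module F g] [FiniteDimensional F g]
    (mul : g →ₗ[F] g →ₗ[F] g)
    (hls : ∀ x y z : g, mul (mul x y) z - mul x (mul y z)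
        = mul (mul y x) z - mul y (mul x z))
    (br : (g × Module.Dual F g) → (g × Module.Dual F g) → (g × Module.Dual F g))
    (hbr : ∀ a b, br a b = (mul a.1 b.1 - mul b.1 a.1,
        - (b.2 ∘ₗ mul a.1) + (a.2 ∘ₗ mul b.1)))
    (ω : (g × Module.Dual F g) → (g × Module.Dual F g) → F)
    (hω : ∀ a b, ω a b = b.2 a.1 - a.2 b.1)
    (star : (g × Module.Dual F g) → (g × Module.Dual F g) → (g × Module.Dual F g))
    (hstar : ∀ a b c, ω a (star b c) = ω (br a b) c)
    (hstar_add : ∀ a b c, star a (b + c) = star a b + star a c)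
    (hsub : ∀ x y : g, (star (x, 0) (y, 0)).1 = mul x y)
    (hideal : ∀ (x : g) (v : Module.Dual F g), (star (x, 0) (0, v)).1 = 0)
    (hFrob : ∃ f : Module.Dual F (g × Module.Dual F g), ∀ a b, ω a b = f (br a b))
    (e : g) (v₀ : Module.Dual F g)
    (hrid : ∀ a, star a (e, v₀) = a) :
    ∀ x : g, mul x e = x :=
  double_frobenius_right_identity_general mul star hstar_add hsub hideal e v₀ hrid
end

section
/- Let g be a finite-dimensional complex Lie algebra, (ρ, V) a finite-dimensional representation with dim g = dim V, and suppose there exists v ∈ V with {ρ(x)v : x ∈ g} = V (a generic point of a cuspidal prehomogeneous vector space). Then g carries a left-symmetric product ∗, defined by ρ(x)ρ(y)v = ρ(x∗y)v, whose adjacent Lie bracket is the bracket of g, and this product has a right identity (the unique e ∈ g with ρ(e)v = v). -/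
attribute [local instance 100] LieRing.ofAssociativeRing

/-!
Since `x ↦ ρ x v` is a linear isomorphism `ψ : g ≃ V`, conjugating `ρ` by `ψ` gives a
representation `ℓ` of `g` on `g` itself, and `x ∗ y := ℓ x y = ψ⁻¹ (ρ x (ψ y))`. Compatibility
`x ∗ y - y ∗ x = ⁅x, y⁆` is `ρ ⁅x, y⁆ v = ρ x (ρ y v) - ρ y (ρ x v)` read through `ψ`, and
left-symmetry is `ℓ (x ∗ y - y ∗ x) = ⁅ℓ x, ℓ y⁆`, i.e. compatibility combined with `ℓ` being
a Lie algebra morphism. The right identity is `ψ⁻¹ v`.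
-/

section LeftSymmetric

variable {R L : Type*} [CommRing R] [LieRing L] [LieAlgebra R L]

theorem leftSymmetric_of_sub_swap_eq_lie (mul : L →ₗ⁅R⁆ Module.End R L)
    (hcompat : ∀ x y : L, mul x y - mul y x = ⁅x, y⁆) (x y z : L) :
    mul (mul x y) z - mul x (mul y z) = mul (mul y x) z - mul y (mul x z) := by
  rw [sub_eq_sub_iff_sub_eq_sub, ← LinearMap.sub_apply, ← map_sub, hcompat, LieHom.map_lie]
  rfl

end LeftSymmetric

section OrbitProduct

variable {R L M : Type*} [CommRing R] [LieRing L] [LieAlgebra R L] [AddCommGroup M] [Module R M]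

def orbitMap (ρ : L →ₗ⁅R⁆ Module.End R M) (v : M) : L →ₗ[R] M :=
  LinearMap.applyₗ v ∘ₗ ρ.toLinearMap

def orbitProduct (ρ : L →ₗ⁅R⁆ Module.End R M) (ψ : L ≃ₗ[R] M) : L →ₗ⁅R⁆ Module.End R L :=
  ψ.symm.lieConj.toLieHom.comp ρ

variable (ρ : L →ₗ⁅R⁆ Module.End R M) (ψ : L ≃ₗ[R] M)

theorem apply_orbitProduct (x y : L) : ψ (orbitProduct ρ ψ x y) = ρ x (ψ y) := by
  simp [orbitProduct, LinearEquiv.lieConj_apply, LinearEquiv.conj_apply]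

variable {v : M}

theorem orbitProduct_spec (hψ : ∀ x : L, ψ x = ρ x v) (x y : L) :
    ρ x (ρ y v) = ρ (orbitProduct ρ ψ x y) v := by
  rw [← hψ, ← hψ, apply_orbitProduct]

theorem orbitProduct_sub_swap (hψ : ∀ x : L, ψ x = ρ x v) (x y : L) :
    orbitProduct ρ ψ x y - orbitProduct ρ ψ y x = ⁅x, y⁆ := by
  apply ψ.injective
  rw [map_sub, apply_orbitProduct, apply_orbitProduct, hψ, hψ, hψ, LieHom.map_lie]
  rfl

theorem orbitProduct_symm_apply_self (hψ : ∀ x : L, ψ x = ρ x v) (x : L) :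
    orbitProduct ρ ψ x (ψ.symm v) = x := by
  apply ψ.injective
  rw [apply_orbitProduct, ψ.apply_symm_apply, hψ]

end OrbitProduct

theorem orbitMap_bijective_of_finrank_eq {K L M : Type*} [Field K] [LieRing L] [LieAlgebra K L]
    [FiniteDimensional K L] [AddCommGroup M] [Module K M] [FiniteDimensional K M]
    (ρ : L →ₗ⁅K⁆ Module.End K M) (hdim : Module.finrank K L = Module.finrank K M) (v : M)
    (hv : Function.Surjective (orbitMap ρ v)) : Function.Bijective (orbitMap ρ v) :=
  ⟨(LinearMap.injective_iff_surjective_of_finrank_eq_finrank hdim).mpr hv, hv⟩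

/-- A cuspidal prehomogeneous vector space `(g, ρ, V)` (with `dim g = dim V`
and a generic point `v`) induces a compatible left-symmetric product on `g`
with a right identity. -/
theorem cuspidalPV_gives_lsa {g : Type*} [LieRing g] [LieAlgebra ℂ g]
    [FiniteDimensional ℂ g] {V : Type*} [AddCommGroup V] [Module ℂ V]
    [FiniteDimensional ℂ V]
    (ρ : g →ₗ⁅ℂ⁆ Module.End ℂ V)
    (hdim : Module.finrank ℂ g = Module.finrank ℂ V)
    (v : V) (hv : ∀ w : V, ∃ x : g, ρ x v = w) :
    ∃ mul : g →ₗ[ℂ] g →ₗ[ℂ] g,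
      (∀ x y : g, ρ x (ρ y v) = ρ (mul x y) v) ∧
      (∀ x y z : g, mul (mul x y) z - mul x (mul y z)
          = mul (mul y x) z - mul y (mul x z)) ∧
      (∀ x y : g, mul x y - mul y x = ⁅x, y⁆) ∧
      ∃ e : g, ρ e v = v ∧ ∀ x : g, mul x e = x := by
  let ψ := LinearEquiv.ofBijective (orbitMap ρ v) (orbitMap_bijective_of_finrank_eq ρ hdim v hv)
  have hψ : ∀ x : g, ψ x = ρ x v := fun _ => rfl
  refine ⟨orbitProduct ρ ψ, orbitProduct_spec ρ ψ hψ,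
    leftSymmetric_of_sub_swap_eq_lie _ (orbitProduct_sub_swap ρ ψ hψ),
    orbitProduct_sub_swap ρ ψ hψ, ψ.symm v, ?_, orbitProduct_symm_apply_self ρ ψ hψ⟩
  rw [← hψ, ψ.apply_symm_apply]
end

section
/- Let g be a finite-dimensional Lie algebra and ρ_i : g → End(V_i) (i = 1, 2) finite-dimensional representations. Then the following are equivalent: (1) there exists (v₁, v₂) ∈ V₁ ⊕ V₂ with {(ρ₁(x)v₁, ρ₂(x)v₂) : x ∈ g} = V₁ ⊕ V₂; (2) there exists v₁ ∈ V₁ with {ρ₁(x)v₁ : x ∈ g} = V₁ and, for h = {x ∈ g : ρ₁(x)v₁ = 0} the isotropy subalgebra, there exists v₂ ∈ V₂ with {ρ₂(x)v₂ : x ∈ h} = V₂. -/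
attribute [local instance 100] LieRing.ofAssociativeRing

theorem LinearMap.surjective_prod_iff {R M N₁ N₂ : Type*} [Semiring R] [AddCommMonoid M]
    [AddCommMonoid N₁] [AddCommGroup N₂] [Module R M] [Module R N₁] [Module R N₂]
    (f : M →ₗ[R] N₁) (h : M →ₗ[R] N₂) :
    Function.Surjective (f.prod h) ↔
      Function.Surjective f ∧ Function.Surjective (h.domRestrict (LinearMap.ker f)) := by
  constructor
  · intro hs
    refine ⟨fun w₁ => ?_, fun w₂ => ?_⟩
    · obtain ⟨x, hx⟩ := hs (w₁, 0)
      exact ⟨x, congrArg Prod.fst hx⟩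
    · obtain ⟨x, hx⟩ := hs (0, w₂)
      exact ⟨⟨x, congrArg Prod.fst hx⟩, congrArg Prod.snd hx⟩
  · rintro ⟨hf, hk⟩ ⟨w₁, w₂⟩
    obtain ⟨x, rfl⟩ := hf w₁
    -- correct the second component inside the kernel of `f`, without moving the first
    obtain ⟨⟨y, hy⟩, hy'⟩ := hk (w₂ - h x)
    refine ⟨x + y, Prod.ext ?_ ?_⟩
    · simp [LinearMap.mem_ker.mp hy]
    · rw [LinearMap.domRestrict_apply] at hy'
      simp [hy']

theorem directSum_PV_iff_general {g : Type*} [LieRing g] [LieAlgebra ℂ g]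
    {V₁ : Type*} [AddCommGroup V₁] [Module ℂ V₁]
    {V₂ : Type*} [AddCommGroup V₂] [Module ℂ V₂]
    (ρ₁ : g →ₗ⁅ℂ⁆ Module.End ℂ V₁) (ρ₂ : g →ₗ⁅ℂ⁆ Module.End ℂ V₂) :
    (∃ (v₁ : V₁) (v₂ : V₂), ∀ (w₁ : V₁) (w₂ : V₂), ∃ x : g,
        ρ₁ x v₁ = w₁ ∧ ρ₂ x v₂ = w₂)
    ↔ (∃ v₁ : V₁, (∀ w₁ : V₁, ∃ x : g, ρ₁ x v₁ = w₁) ∧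
        ∃ v₂ : V₂, ∀ w₂ : V₂, ∃ x : g, ρ₁ x v₁ = 0 ∧ ρ₂ x v₂ = w₂) := by
  have orbit_maps (v₁ : V₁) (v₂ : V₂) := LinearMap.surjective_prod_iff
    (ρ₁.toLinearMap.flip v₁) (ρ₂.toLinearMap.flip v₂)
  simp only [Function.Surjective, Prod.forall, Prod.ext_iff, LinearMap.coe_prod,
    Function.prod_apply, Subtype.exists, LinearMap.mem_ker, LinearMap.domRestrict_apply,
    LinearMap.flip_apply, LieHom.coe_toLinearMap, exists_prop] at orbit_maps
  simp only [orbit_maps, exists_and_left]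

/-- A direct sum `(g, ρ₁ ⊕ ρ₂, V₁ ⊕ V₂)` is a prehomogeneous vector space iff
`(g, ρ₁, V₁)` is, and the restriction of `ρ₂` to the isotropy subalgebra of a
generic point of `ρ₁` is a prehomogeneous vector space. -/
theorem directSum_PV_iff {g : Type*} [LieRing g] [LieAlgebra ℂ g]
    [FiniteDimensional ℂ g]
    {V₁ : Type*} [AddCommGroup V₁] [Module ℂ V₁] [FiniteDimensional ℂ V₁]
    {V₂ : Type*} [AddCommGroup V₂] [Module ℂ V₂] [FiniteDimensional ℂ V₂]
    (ρ₁ : g →ₗ⁅ℂ⁆ Module.End ℂ V₁) (ρ₂ : g →ₗ⁅ℂ⁆ Module.End ℂ V₂) :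
    (∃ (v₁ : V₁) (v₂ : V₂), ∀ (w₁ : V₁) (w₂ : V₂), ∃ x : g,
        ρ₁ x v₁ = w₁ ∧ ρ₂ x v₂ = w₂)
    ↔ (∃ v₁ : V₁, (∀ w₁ : V₁, ∃ x : g, ρ₁ x v₁ = w₁) ∧
        ∃ v₂ : V₂, ∀ w₂ : V₂, ∃ x : g, ρ₁ x v₁ = 0 ∧ ρ₂ x v₂ = w₂) :=
  directSum_PV_iff_general ρ₁ ρ₂
end

section
/- Let g be a finite-dimensional Lie algebra and (ρ, V) a representation with dim g = dim V admitting a generic point v (so x ↦ ρ(x)v is a linear bijection g → V). Define ∗ on g by ρ(x)ρ(y)v = ρ(x∗y)v and the skew form on g ⊕ V* by ω(x + u, y + w) = w(ρ(x)v) − u(ρ(y)v). Equip g ⊕ V* with the semidirect-product Lie bracket where V* is abelian and g acts by the dual representation. Then ω is nondegenerate, closed, and exact; hence g ⊕ V* is a Frobenius Lie algebra. -/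
attribute [local instance 100] LieRing.ofAssociativeRing

/-!
The form `ω` is the coboundary of the functional `f(x + u) = -u(v)`: the `V*`-component of
`[x + u, y + w]` evaluated at `v` is `u(ρ(y)v) - w(ρ(x)v) = -ω(x + u, y + w)`. Closedness is
then a consequence of the Jacobi identity (here checked directly from `ρ[x, y] = [ρ x, ρ y]`),
and nondegeneracy comes from the orbit map `x ↦ ρ(x)v` being a linear bijection `g ≃ V`:
pairing with `(0, w)` detects `ρ(x)v`, pairing with `(y, 0)` detects `u` on the orbit `V`.
-/

namespace CuspidalPV

variable {F g V : Type*} [Field F] [LieRing g] [LieAlgebra F g] [AddCommGroup V] [Module F V]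
  (ρ : g →ₗ⁅F⁆ Module.End F V) (v : V)

def orbitMap : g →ₗ[F] V :=
  LinearMap.applyₗ v ∘ₗ (ρ : g →ₗ[F] Module.End F V)

@[simp]
theorem orbitMap_apply (x : g) : orbitMap ρ v x = ρ x v := rfl

theorem bijective_orbitMap [FiniteDimensional F g] [FiniteDimensional F V]
    (hdim : Module.finrank F g = Module.finrank F V) (hv : Function.Surjective (orbitMap ρ v)) :
    Function.Bijective (orbitMap ρ v) :=
  ⟨(LinearMap.injective_iff_surjective_of_finrank_eq_finrank hdim).2 hv, hv⟩

def dualSemidirectBracket (a b : g × Module.Dual F V) : g × Module.Dual F V :=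
  (⁅a.1, b.1⁆, -(b.2 ∘ₗ (ρ a.1 : V →ₗ[F] V)) + a.2 ∘ₗ (ρ b.1 : V →ₗ[F] V))

def orbitForm (a b : g × Module.Dual F V) : F :=
  b.2 (ρ a.1 v) - a.2 (ρ b.1 v)

def orbitPrimitive : Module.Dual F (g × Module.Dual F V) :=
  -(Module.Dual.eval F V v ∘ₗ LinearMap.snd F g (Module.Dual F V))

theorem orbitForm_eq_orbitPrimitive_bracket (a b : g × Module.Dual F V) :
    orbitForm ρ v a b = orbitPrimitive v (dualSemidirectBracket ρ a b) := by
  simp only [orbitForm, orbitPrimitive, dualSemidirectBracket, LinearMap.neg_apply,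
    LinearMap.comp_apply, LinearMap.snd_apply, Module.Dual.eval_apply, LinearMap.add_apply]
  ring

theorem orbitForm_cyclic_sum_eq_zero (a b c : g × Module.Dual F V) :
    orbitForm ρ v (dualSemidirectBracket ρ a b) c + orbitForm ρ v (dualSemidirectBracket ρ b c) a +
      orbitForm ρ v (dualSemidirectBracket ρ c a) b = 0 := by
  simp only [orbitForm, dualSemidirectBracket, LieHom.map_lie, Ring.lie_def, LinearMap.sub_apply,
    Module.End.mul_apply, LinearMap.add_apply, LinearMap.neg_apply, LinearMap.comp_apply,
    map_sub]
  ring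

theorem eq_zero_of_orbitForm_eq_zero (hv : Function.Bijective (orbitMap ρ v))
    {a : g × Module.Dual F V} (ha : ∀ b, orbitForm ρ v a b = 0) : a = 0 := by
  have h₁ : orbitMap ρ v a.1 = 0 := by
    refine (Module.forall_dual_apply_eq_zero_iff F _).1 fun w => ?_
    simpa [orbitForm] using ha (0, w)
  have h₂ : a.2 = 0 := by
    ext w
    obtain ⟨y, rfl⟩ := hv.2 w
    simpa [orbitForm] using ha (y, 0)
  exact Prod.ext (hv.1 (h₁.trans (map_zero _).symm)) h₂

end CuspidalPV

open CuspidalPV in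
theorem cuspidalPV_double_frobenius_general {F : Type*} [Field F] {g : Type*}
    [LieRing g] [LieAlgebra F g] [FiniteDimensional F g]
    {V : Type*} [AddCommGroup V] [Module F V] [FiniteDimensional F V]
    (ρ : g →ₗ⁅F⁆ Module.End F V)
    (hdim : Module.finrank F g = Module.finrank F V)
    (v : V) (hv : ∀ w : V, ∃ x : g, ρ x v = w)
    (br : (g × Module.Dual F V) → (g × Module.Dual F V) → (g × Module.Dual F V))
    (hbr : ∀ a b, br a b = (⁅a.1, b.1⁆,
        - (b.2 ∘ₗ (ρ a.1 : V →ₗ[F] V)) + (a.2 ∘ₗ (ρ b.1 : V →ₗ[F] V))))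
    (ω : (g × Module.Dual F V) → (g × Module.Dual F V) → F)
    (hω : ∀ a b, ω a b = b.2 (ρ a.1 v) - a.2 (ρ b.1 v)) :
    (∀ a, (∀ b, ω a b = 0) → a = 0) ∧
      (∀ a b c, ω (br a b) c + ω (br b c) a + ω (br c a) b = 0) ∧
      ∃ f : Module.Dual F (g × Module.Dual F V), ∀ a b, ω a b = f (br a b) := by
  obtain rfl : br = dualSemidirectBracket ρ := funext₂ hbr
  obtain rfl : ω = orbitForm ρ v := funext₂ hω
  exact ⟨fun _ => eq_zero_of_orbitForm_eq_zero ρ v (bijective_orbitMap ρ v hdim hv),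
    orbitForm_cyclic_sum_eq_zero ρ v,
    orbitPrimitive v, orbitForm_eq_orbitPrimitive_bracket ρ v⟩

/-- For a cuspidal prehomogeneous vector space `(g, ρ, V)` with generic point
`v`, the semidirect sum `g ⊕ V*` (with `V*` abelian, `g` acting by the dual
representation) with the form `ω(x+u, y+w) = w(ρ(x)v) - u(ρ(y)v)` is a
Frobenius Lie algebra: `ω` is nondegenerate, closed and exact. -/
theorem cuspidalPV_double_frobenius {F : Type*} [Field F] {g : Type*}
    [LieRing g] [LieAlgebra F g] [FiniteDimensional F g]
    {V : Type*} [AddCommGroup V] [Module F V] [FiniteDimensional F V]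
    (ρ : g →ₗ⁅F⁆ Module.End F V)
    (hdim : Module.finrank F g = Module.finrank F V)
    (v : V) (hv : ∀ w : V, ∃ x : g, ρ x v = w)
    (mul : g → g → g) (hmul : ∀ x y : g, ρ x (ρ y v) = ρ (mul x y) v)
    (br : (g × Module.Dual F V) → (g × Module.Dual F V) → (g × Module.Dual F V))
    (hbr : ∀ a b, br a b = (⁅a.1, b.1⁆,
        - (b.2 ∘ₗ (ρ a.1 : V →ₗ[F] V)) + (a.2 ∘ₗ (ρ b.1 : V →ₗ[F] V))))
    (ω : (g × Module.Dual F V) → (g × Module.Dual F V) → F)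
    (hω : ∀ a b, ω a b = b.2 (ρ a.1 v) - a.2 (ρ b.1 v)) :
    (∀ a, (∀ b, ω a b = 0) → a = 0) ∧
      (∀ a b c, ω (br a b) c + ω (br b c) a + ω (br c a) b = 0) ∧
      ∃ f : Module.Dual F (g × Module.Dual F V), ∀ a b, ω a b = f (br a b) :=
  cuspidalPV_double_frobenius_general ρ hdim v hv br hbr ω hω
end
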